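/- In an A-cast vCGS, for any history h generated from an initial state, all non-initial states s along h satisfy: for all a, b ∈ A, c ∉ A, v ∈ V_c, vis(v,a) ∈ s iff vis(v,b) ∈ s (i.e., the visibility of outsider-owned atoms to coalition members is uniform across the coalition at every non-initial state). -/
import Mathlib


inductive Atom (AP Ag : Type*)
  | prop (v : AP)
  | vis (v : AP) (a : Ag)

abbrev VState (AP Ag : Type*) := Set (Atom AP Ag)

structure Cmd (AP Ag : Type*) where
  asgProp : AP → Option Bool
  asgVis : AP → Ag → Option Bool

def step {AP Ag : Type*} (own : AP → Ag) (s : VState AP Ag) (γ : Ag → Cmd AP Ag) :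
    VState AP Ag :=
  {x | match x with
    | Atom.prop v =>
        (γ (own v)).asgProp v = some true ∨
        (Atom.prop v ∈ s ∧ (γ (own v)).asgProp v ≠ some false)
    | Atom.vis v a =>
        (γ (own v)).asgVis v a = some true ∨
        (Atom.vis v a ∈ s ∧ (γ (own v)).asgVis v a ≠ some false)}

def Cmp {AP Ag : Type*} (A : Set Ag) (Vc : Set AP) (γ : Cmd AP Ag) : Prop :=
  ∀ v ∈ Vc, ∀ a ∈ A, (γ.asgVis v a).isSome

def Dagger {AP Ag : Type*} (A : Set Ag) (Vc : Set AP) (γ : Cmd AP Ag) : Prop :=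
  ∀ v ∈ Vc, ∀ a ∈ A, ∀ b ∈ A, ∀ t : Bool,
    (γ.asgVis v a = some t ↔ γ.asgVis v b = some t)

/-- in an A-cast vCGS, along any history generated from an
initial state (here `h 0, h 1, …, h n` with `h (k+1) = step own (h k) (γ k)`,
where every outsider component of every joint action satisfies (Cmp) and
(†^A)), every non-initial state has uniform visibility, across the coalition
`A`, of the atoms owned by agents outside `A`. -/
theorem acast_history_uniform_visibility {AP Ag : Type*} (A : Set Ag)
    (own : AP → Ag) (V : Ag → Set AP) (hown : ∀ v : AP, v ∈ V (own v))
    (n : ℕ) (h : ℕ → VState AP Ag) (γ : ℕ → Ag → Cmd AP Ag)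
    (hstep : ∀ k < n, h (k + 1) = step own (h k) (γ k))
    (hCmp : ∀ k < n, ∀ c ∉ A, Cmp A (V c) (γ k c))
    (hDag : ∀ k < n, ∀ c ∉ A, Dagger A (V c) (γ k c)) :
    ∀ k, 1 ≤ k → k ≤ n →
      ∀ a ∈ A, ∀ b ∈ A, ∀ c ∉ A, ∀ v ∈ V c, own v = c →
        (Atom.vis v a ∈ h k ↔ Atom.vis v b ∈ h k) := by
  intro k hk1 hkn a ha b hb c hc v hv hvc
  obtain ⟨m, rfl⟩ : ∃ m, k = m + 1 := ⟨k - 1, (Nat.succ_pred_eq_of_pos hk1).symm⟩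
  have hm : m < n := hkn
  rw [hstep m hm]
  have key : ∀ x ∈ A, (Atom.vis v x ∈ step own (h m) (γ m) ↔
      (γ m c).asgVis v x = some true) := by
    intro x hx
    have hs := hCmp m hm c hc v hv x hx
    simp only [step, Set.mem_setOf_eq, hvc]
    constructor
    · rintro (h1 | ⟨_, h2⟩)
      · exact h1
      · rcases Option.isSome_iff_exists.mp hs with ⟨t, ht⟩
        cases t
        · exact absurd ht h2
        · exact ht
    · intro h1
      exact Or.inl h1
  rw [key a ha, key b hb]
  exact hDag m hm c hc v hv a ha b hb true
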